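/- For every integer k ≥ 4, there exists a coalition partition Ψ of the path P_k with three parts such that the coalition graph CG(P_k, Ψ) is isomorphic to the path P_3. -/

import Mathlib

open SimpleGraph

attribute [local instance] Classical.propDecidable

def Dominates {V : Type*} (G : SimpleGraph V) (S : Set V) : Prop :=
  ∀ v, v ∉ S → ∃ u ∈ S, G.Adj u v

def Coalition {V : Type*} (G : SimpleGraph V) (A B : Set V) : Prop :=
  Disjoint A B ∧ ¬ Dominates G A ∧ ¬ Dominates G B ∧ Dominates G (A ∪ B)

def IsCoalitionPartition {V : Type*} (G : SimpleGraph V) (P : Finset (Set V)) : Prop :=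
  (∀ A ∈ P, A.Nonempty) ∧
  (∀ A ∈ P, ∀ B ∈ P, A ≠ B → Disjoint A B) ∧
  (∀ v : V, ∃ A ∈ P, v ∈ A) ∧
  (∀ A ∈ P, (Dominates G A ∧ ∃ v, A = {v}) ∨
    (¬ Dominates G A ∧ ∃ B ∈ P, B ≠ A ∧ Coalition G A B))

noncomputable def coalitionNumber {V : Type*} (G : SimpleGraph V) : ℕ :=
  sSup {n | ∃ P : Finset (Set V), IsCoalitionPartition G P ∧ P.card = n}

def coalitionGraph {V : Type*} (G : SimpleGraph V) (P : Finset (Set V)) :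
    SimpleGraph {A : Set V // A ∈ P} where
  Adj A B := Coalition G A.1 B.1
  symm := by
    constructor
    rintro A B ⟨d, na, nb, u⟩
    exact ⟨d.symm, nb, na, by rwa [Set.union_comm]⟩
  loopless := by
    constructor
    rintro ⟨A, hA⟩ ⟨d, na, nb, u⟩
    rw [Set.union_self] at u
    exact na u

/-! On `P_k` take `A = {0}`, `B = {1}` and `C = {2, …, k-1}`. Neither `A ∪ B` (which misses the
neighbours of vertex `3`) nor `C` (which misses those of vertex `0`) dominates, while `A ∪ C` and
`B ∪ C` each leave out a single vertex, adjacent to the singleton. So the only coalitions are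
`A–C` and `C–B`, and the coalition graph is the path `A – C – B`. -/

section

variable {V : Type*} {G : SimpleGraph V}

theorem Dominates.mono {S T : Set V} (hS : Dominates G S) (hST : S ⊆ T) : Dominates G T :=
  fun v hv ↦
    let ⟨u, hu, huv⟩ := hS v fun h ↦ hv (hST h)
    ⟨u, hST hu, huv⟩

theorem Coalition.symm {A B : Set V} (h : Coalition G A B) : Coalition G B A :=
  ⟨h.1.symm, h.2.2.1, h.2.1, by rw [Set.union_comm]; exact h.2.2.2⟩

theorem not_coalition_self (A : Set V) : ¬ Coalition G A A := by
  rintro ⟨-, hA, -, hAA⟩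
  exact hA (by rwa [Set.union_self] at hAA)

/-- The arguments are ordered `A, C, B` as along the path formed by the coalition graph. -/
structure IsPathCoalitionTriple (G : SimpleGraph V) (A C B : Set V) : Prop where
  disjoint_left_center : Disjoint A C
  disjoint_left_right : Disjoint A B
  disjoint_center_right : Disjoint C B
  cover : ∀ v, v ∈ A ∨ v ∈ C ∨ v ∈ B
  not_dominates_left_union_right : ¬ Dominates G (A ∪ B)
  not_dominates_center : ¬ Dominates G C
  dominates_left_union_center : Dominates G (A ∪ C)
  dominates_center_union_right : Dominates G (C ∪ B)

namespace IsPathCoalitionTriple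

variable {A C B : Set V} (h : IsPathCoalitionTriple G A C B)
include h

theorem not_dominates_left : ¬ Dominates G A :=
  fun hA ↦ h.not_dominates_left_union_right (hA.mono Set.subset_union_left)

theorem not_dominates_right : ¬ Dominates G B :=
  fun hB ↦ h.not_dominates_left_union_right (hB.mono Set.subset_union_right)

theorem coalition_left_center : Coalition G A C :=
  ⟨h.disjoint_left_center, h.not_dominates_left, h.not_dominates_center,
    h.dominates_left_union_center⟩

theorem coalition_center_right : Coalition G C B :=
  ⟨h.disjoint_center_right, h.not_dominates_center, h.not_dominates_right,
    h.dominates_center_union_right⟩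

theorem not_coalition_left_right : ¬ Coalition G A B :=
  fun hAB ↦ h.not_dominates_left_union_right hAB.2.2.2

theorem not_coalition_right_left : ¬ Coalition G B A :=
  fun hBA ↦ h.not_coalition_left_right hBA.symm

theorem left_nonempty : A.Nonempty := by
  refine Set.nonempty_iff_ne_empty.2 fun hA ↦ h.not_dominates_center ?_
  simpa [hA] using h.dominates_left_union_center

theorem right_nonempty : B.Nonempty := by
  refine Set.nonempty_iff_ne_empty.2 fun hB ↦ h.not_dominates_center ?_
  simpa [hB] using h.dominates_center_union_right

theorem center_nonempty : C.Nonempty := by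
  refine Set.nonempty_iff_ne_empty.2 fun hC ↦ h.not_dominates_left ?_
  simpa [hC] using h.dominates_left_union_center

theorem left_ne_center : A ≠ C :=
  h.disjoint_left_center.ne h.left_nonempty.ne_empty

theorem left_ne_right : A ≠ B :=
  h.disjoint_left_right.ne h.left_nonempty.ne_empty

theorem center_ne_right : C ≠ B :=
  h.disjoint_center_right.ne h.center_nonempty.ne_empty

theorem isCoalitionPartition : IsCoalitionPartition G {A, C, B} := by
  refine ⟨?nonempty, ?disjoint, ?cover, ?coalition⟩
  case nonempty =>
    simp only [Finset.mem_insert, Finset.mem_singleton]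
    rintro X (rfl | rfl | rfl)
    exacts [h.left_nonempty, h.center_nonempty, h.right_nonempty]
  case disjoint =>
    simp only [Finset.mem_insert, Finset.mem_singleton]
    rintro X (rfl | rfl | rfl) Y (rfl | rfl | rfl) hXY
    all_goals first
      | exact absurd rfl hXY
      | exact h.disjoint_left_center | exact h.disjoint_left_right
      | exact h.disjoint_center_right | exact h.disjoint_left_center.symm
      | exact h.disjoint_left_right.symm | exact h.disjoint_center_right.symm
  case cover =>
    intro v
    rcases h.cover v with hv | hv | hv
    exacts [⟨A, by simp, hv⟩, ⟨C, by simp, hv⟩, ⟨B, by simp, hv⟩]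
  case coalition =>
    simp only [Finset.mem_insert, Finset.mem_singleton]
    rintro X (rfl | rfl | rfl)
    · exact .inr ⟨h.not_dominates_left, C, by simp, h.left_ne_center.symm,
        h.coalition_left_center⟩
    · exact .inr ⟨h.not_dominates_center, B, by simp, h.center_ne_right.symm,
        h.coalition_center_right⟩
    · exact .inr ⟨h.not_dominates_right, C, by simp, h.center_ne_right,
        h.coalition_center_right.symm⟩

theorem card_eq_three : ({A, C, B} : Finset (Set V)).card = 3 :=
  Finset.card_eq_three.2 ⟨A, C, B, h.left_ne_center, h.left_ne_right, h.center_ne_right, rfl⟩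

noncomputable def partEquiv : Fin 3 ≃ {X : Set V // X ∈ ({A, C, B} : Finset (Set V))} :=
  Equiv.ofBijective (fun i ↦ ⟨![A, C, B] i, by fin_cases i <;> simp⟩) <| by
    have := h.left_ne_center; have := h.left_ne_right; have := h.center_ne_right
    constructor
    · intro i j hij
      have hij := congrArg Subtype.val hij
      fin_cases i <;> fin_cases j <;> simp only [Fin.zero_eta, Fin.mk_one, Fin.reduceFinMk,
        Matrix.cons_val] at hij ⊢ <;> first | rfl | exact absurd hij ‹_› | exact absurd hij.symm ‹_›
    · rintro ⟨X, hX⟩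
      simp only [Finset.mem_insert, Finset.mem_singleton] at hX
      rcases hX with rfl | rfl | rfl
      exacts [⟨0, rfl⟩, ⟨1, rfl⟩, ⟨2, rfl⟩]

noncomputable def coalitionGraphIso : coalitionGraph G {A, C, B} ≃g pathGraph 3 :=
  Iso.symm ⟨h.partEquiv, fun {i j} ↦ by
    change Coalition G (![A, C, B] i) (![A, C, B] j) ↔ _
    fin_cases i <;> fin_cases j <;>
      simp [pathGraph_adj, not_coalition_self, h.coalition_left_center,
        h.coalition_center_right, h.coalition_left_center.symm, h.coalition_center_right.symm,
        h.not_coalition_left_right, h.not_coalition_right_left]⟩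

end IsPathCoalitionTriple

end

theorem isPathCoalitionTriple_pathGraph {k : ℕ} (hk : 4 ≤ k) :
    IsPathCoalitionTriple (pathGraph k) {v | v.val = 0} {v | 2 ≤ v.val} {v | v.val = 1} where
  disjoint_left_center := Set.disjoint_left.2 fun v (h : v.val = 0) (h' : 2 ≤ v.val) ↦ by omega
  disjoint_left_right := Set.disjoint_left.2 fun v (h : v.val = 0) (h' : v.val = 1) ↦ by omega
  disjoint_center_right := Set.disjoint_left.2 fun v (h : 2 ≤ v.val) (h' : v.val = 1) ↦ by omega
  cover v := by simp only [Set.mem_ofPred_eq]; omega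
  not_dominates_left_union_right hdom := by
    obtain ⟨u, hu, huv⟩ := hdom ⟨3, by omega⟩ (by simp)
    simp only [Set.mem_union, Set.mem_ofPred_eq, pathGraph_adj] at hu huv
    omega
  not_dominates_center hdom := by
    obtain ⟨u, hu, huv⟩ := hdom ⟨0, by omega⟩ (by simp)
    simp only [Set.mem_ofPred_eq, pathGraph_adj] at hu huv
    omega
  dominates_left_union_center v hv := by
    simp only [Set.mem_union, Set.mem_ofPred_eq] at hv
    exact ⟨⟨0, by omega⟩, by simp, by simp only [pathGraph_adj]; omega⟩
  dominates_center_union_right v hv := by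
    simp only [Set.mem_union, Set.mem_ofPred_eq] at hv
    exact ⟨⟨1, by omega⟩, by simp, by simp only [pathGraph_adj]; omega⟩

theorem stmt13 (k : ℕ) (hk : 4 ≤ k) :
    ∃ P : Finset (Set (Fin k)),
      IsCoalitionPartition (SimpleGraph.pathGraph k) P ∧ P.card = 3 ∧
      Nonempty ((coalitionGraph (SimpleGraph.pathGraph k) P) ≃g
        SimpleGraph.pathGraph 3) :=
  have h := isPathCoalitionTriple_pathGraph hk
  ⟨_, h.isCoalitionPartition, h.card_eq_three, ⟨h.coalitionGraphIso⟩⟩
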